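/- Let A be a skew-symmetric payoff matrix on Fin N whose pure strategies are partitioned into a nonempty set Π_eq and its complement Π_out, and suppose there is r > 0 such that A i ρ ≥ r for every i ∈ Π_eq and ρ ∈ Π_out, while |A i j| < r for all i, j ∈ Π_eq. Then for every nonempty population P ⊆ Fin N: if P ⊆ Π_out then PE(P) ≥ r; and if P ∩ Π_eq ≠ ∅ then PE(P) < r. -/
import Mathlib


/-- Payoff of pure strategy `i` against mixed strategy `σ`: `(Aσ) i = ∑ j, A i j * σ j`. -/
noncomputable def pay {N : ℕ} (A : Fin N → Fin N → ℝ) (σ : Fin N → ℝ) (i : Fin N) : ℝ :=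
  ∑ j, A i j * σ j

/-- `max_i (Aσ) i`. -/
noncomputable def maxPay {N : ℕ} (A : Fin N → Fin N → ℝ) (σ : Fin N → ℝ) : ℝ :=
  ⨆ i, pay A σ i

/-- `σ` is a mixed strategy supported inside `P`. -/
def SuppIn {N : ℕ} (P : Set (Fin N)) (σ : Fin N → ℝ) : Prop :=
  σ ∈ stdSimplex ℝ (Fin N) ∧ ∀ j ∉ P, σ j = 0

/-- Population exploitability of a population `P`:
the least value of `max_i (Aσ) i` over mixed strategies supported in `P`. -/
noncomputable def PE {N : ℕ} (A : Fin N → Fin N → ℝ) (P : Set (Fin N)) : ℝ :=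
  sInf (maxPay A '' {σ | SuppIn P σ})

/-- `i` is a best response to `σ`. -/
def IsBR {N : ℕ} (A : Fin N → Fin N → ℝ) (σ : Fin N → ℝ) (i : Fin N) : Prop :=
  pay A σ i = maxPay A σ

lemma pay_le_maxPay {N : ℕ} [NeZero N] (A : Fin N → Fin N → ℝ) (σ : Fin N → ℝ) (i : Fin N) :
    pay A σ i ≤ maxPay A σ :=
  le_ciSup (Set.Finite.bddAbove (Set.finite_range _)) i

lemma maxPay_nonneg {N : ℕ} [NeZero N] (A : Fin N → Fin N → ℝ) (hA : ∀ i j, A j i = -A i j)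
    (σ : Fin N → ℝ) (hσ : σ ∈ stdSimplex ℝ (Fin N)) : 0 ≤ maxPay A σ := by
  have hS : ∑ i, σ i * pay A σ i = 0 := by
    have h1 : ∑ i, σ i * pay A σ i = ∑ i, ∑ j, σ i * σ j * A i j := by
      unfold pay
      refine Finset.sum_congr rfl fun i _ => ?_
      rw [Finset.mul_sum]
      exact Finset.sum_congr rfl fun j _ => by ring
    have h2 : ∑ i, ∑ j, σ i * σ j * A i j = -∑ i, ∑ j, σ i * σ j * A i j := by
      calc ∑ i, ∑ j, σ i * σ j * A i j = ∑ j, ∑ i, σ i * σ j * A i j := Finset.sum_comm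
        _ = ∑ i, ∑ j, σ j * σ i * A j i := rfl
        _ = ∑ i, ∑ j, -(σ i * σ j * A i j) := by
            refine Finset.sum_congr rfl fun i _ => Finset.sum_congr rfl fun j _ => ?_
            rw [hA i j]; ring
        _ = -∑ i, ∑ j, σ i * σ j * A i j := by rw [← Finset.sum_neg_distrib]; simp
    rw [h1]
    linarith
  have hle : ∑ i, σ i * pay A σ i ≤ ∑ i, σ i * maxPay A σ :=
    Finset.sum_le_sum fun i _ => mul_le_mul_of_nonneg_left (pay_le_maxPay A σ i) (hσ.1 i)
  rw [hS, ← Finset.sum_mul, hσ.2, one_mul] at hle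
  exact hle

/-- for a skew-symmetric game whose pure strategies split into `Peq`
(the set `Π_eq`) and its complement `Π_out`, with every `Π_eq`-strategy beating every
outside strategy by at least `r > 0` while internal payoffs are `< r` in absolute
value: populations inside the complement have `PE ≥ r`, while populations meeting
`Π_eq` have `PE < r`. -/
theorem stmt4 {N : ℕ} (A : Fin N → Fin N → ℝ) (hA : ∀ i j, A j i = -A i j)
    (Peq : Set (Fin N)) (hne : Peq.Nonempty) (r : ℝ) (hr : 0 < r)
    (hout : ∀ i ∈ Peq, ∀ ρ ∉ Peq, r ≤ A i ρ)
    (hin : ∀ i ∈ Peq, ∀ j ∈ Peq, |A i j| < r)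
    (P : Set (Fin N)) (hP : P.Nonempty) :
    (P ⊆ Peqᶜ → r ≤ PE A P) ∧ ((P ∩ Peq).Nonempty → PE A P < r) := by
  obtain ⟨p, hp⟩ := hP
  haveI : NeZero N := ⟨by rintro rfl; exact p.elim0⟩
  -- indicator strategy
  have hInd : ∀ k : Fin N, k ∈ P → SuppIn P (fun j => if j = k then (1:ℝ) else 0) := by
    intro k hk
    refine ⟨⟨fun j => by positivity, by simp⟩, fun j hj => ?_⟩
    simp only [ite_eq_right_iff]
    rintro rfl; exact absurd hk hj
  have hpayInd : ∀ (k i : Fin N), pay A (fun j => if j = k then (1:ℝ) else 0) i = A i k := by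
    intro k i
    unfold pay
    rw [Finset.sum_eq_single k] <;> simp +contextual
  constructor
  · intro hsub
    refine le_csInf ⟨_, ⟨_, hInd p hp, rfl⟩⟩ ?_
    rintro b ⟨σ, ⟨hσ, hσ0⟩, rfl⟩
    obtain ⟨i0, hi0⟩ := hne
    have hpay : r ≤ pay A σ i0 := by
      have : ∀ j, r * σ j ≤ A i0 j * σ j := by
        intro j
        by_cases hj : j ∈ P
        · exact mul_le_mul_of_nonneg_right (hout i0 hi0 j (hsub hj)) (hσ.1 j)
        · simp [hσ0 j hj]
      calc r = r * ∑ j, σ j := by rw [hσ.2, mul_one]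
        _ = ∑ j, r * σ j := Finset.mul_sum _ _ _
        _ ≤ ∑ j, A i0 j * σ j := Finset.sum_le_sum fun j _ => this j
        _ = pay A σ i0 := rfl
    exact hpay.trans (pay_le_maxPay A σ i0)
  · rintro ⟨k, hkP, hkPeq⟩
    set σ : Fin N → ℝ := fun j => if j = k then (1:ℝ) else 0 with hσdef
    have h1 : PE A P ≤ maxPay A σ := by
      refine csInf_le ⟨0, ?_⟩ ⟨σ, hInd k hkP, rfl⟩
      rintro b ⟨τ, hτ, rfl⟩
      exact maxPay_nonneg A hA τ hτ.1
    have h2 : maxPay A σ < r := by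
      have hlt : ∀ i, pay A σ i < r := by
        intro i
        rw [hpayInd k i]
        by_cases hi : i ∈ Peq
        · exact (abs_lt.mp (hin i hi k hkPeq)).2
        · have := hout k hkPeq i hi
          have h := hA k i
          linarith
      obtain ⟨i0, hi0⟩ := Finite.exists_max (pay A σ)
      exact lt_of_le_of_lt (ciSup_le hi0) (hlt i0)
    exact lt_of_le_of_lt h1 h2
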